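/- arXiv:1403.2484 — 2 statements merged into one kernel-verified Lean document; each statement's English description precedes it below -/
import Mathlib

section
/- For any symmetric nonnegative matrices C ∈ ℝ₊^{n×n}, D ∈ ℝ₊^{k×k}, and nonnegative matrices H ∈ ℝ₊^{n×k}, H′ ∈ ℝ₊^{n×k} with H′ entrywise positive, the inequality ∑_{i,j} (C H′ D)_{ij} H_{ij}² / H′_{ij} ≥ Tr(Hᵀ C H D) holds. -/
open Matrix

private lemma inner_swap {α β γ δ : Type*} [Fintype γ] [Fintype δ]
    (s : Finset α) (t : Finset β) (f : α → β → γ → δ → ℝ) :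
    ∑ a ∈ s, ∑ b ∈ t, ∑ c, ∑ d, f a b c d
      = ∑ a ∈ s, ∑ b ∈ t, ∑ d, ∑ c, f a b c d :=
  Finset.sum_congr rfl fun _ _ => Finset.sum_congr rfl fun _ _ => Finset.sum_comm

private lemma mid_swap {α β γ δ : Type*} [Fintype β] [Fintype γ]
    (s : Finset α) (f : α → β → γ → δ → ℝ) (g : δ → ℝ) [Fintype δ] :
    ∑ a ∈ s, ∑ b, ∑ c, ∑ d, f a b c d
      = ∑ a ∈ s, ∑ c, ∑ b, ∑ d, f a b c d :=
  Finset.sum_congr rfl fun _ _ => Finset.sum_comm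

private lemma quad_comm {α β : Type*} [Fintype α] [Fintype β]
    (f : α → β → α → β → ℝ) :
    ∑ i, ∑ j, ∑ p, ∑ q, f i j p q = ∑ p, ∑ q, ∑ i, ∑ j, f i j p q := by
  calc ∑ i, ∑ j, ∑ p, ∑ q, f i j p q
      = ∑ i, ∑ p, ∑ j, ∑ q, f i j p q := by
        refine Finset.sum_congr rfl fun i _ => ?_; exact Finset.sum_comm
    _ = ∑ p, ∑ i, ∑ j, ∑ q, f i j p q := Finset.sum_comm
    _ = ∑ p, ∑ i, ∑ q, ∑ j, f i j p q := by
        refine Finset.sum_congr rfl fun p _ => ?_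
        refine Finset.sum_congr rfl fun i _ => ?_; exact Finset.sum_comm
    _ = ∑ p, ∑ q, ∑ i, ∑ j, f i j p q := by
        refine Finset.sum_congr rfl fun p _ => ?_; exact Finset.sum_comm

private lemma pull_inner {α β γ δ : Type*}
    [Fintype α] [Fintype β] [Fintype γ] [Fintype δ]
    (f : α → β → γ → δ → ℝ) :
    ∑ a, ∑ b, ∑ c, ∑ d, f a b c d = ∑ d, ∑ a, ∑ b, ∑ c, f a b c d := by
  calc ∑ a, ∑ b, ∑ c, ∑ d, f a b c d
      = ∑ a, ∑ b, ∑ d, ∑ c, f a b c d :=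
        Finset.sum_congr rfl fun a _ => Finset.sum_congr rfl fun b _ =>
          Finset.sum_comm
    _ = ∑ a, ∑ d, ∑ b, ∑ c, f a b c d :=
        Finset.sum_congr rfl fun a _ => Finset.sum_comm
    _ = ∑ d, ∑ a, ∑ b, ∑ c, f a b c d := Finset.sum_comm

private lemma key_ineq (c d a b x y : ℝ) (hc : 0 ≤ c) (hd : 0 ≤ d)
    (ha : 0 < a) (hb : 0 < b) :
    2 * (c * d * x * y) ≤ c * d * b * x ^ 2 / a + c * d * a * y ^ 2 / b := by
  rw [div_add_div _ _ ha.ne' hb.ne', le_div_iff₀ (by positivity)]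
  nlinarith [mul_nonneg (mul_nonneg hc hd) (sq_nonneg (b * x - a * y))]

/-- Ding et al.'s auxiliary-function inequality:
`∑_{i,j} (C H' D)_{ij} H_{ij}² / H'_{ij} ≥ Tr(Hᵀ C H D)`. -/
theorem ding_auxiliary_inequality {n k : ℕ}
    (C : Matrix (Fin n) (Fin n) ℝ) (D : Matrix (Fin k) (Fin k) ℝ)
    (H H' : Matrix (Fin n) (Fin k) ℝ)
    (hC : C.IsSymm) (hD : D.IsSymm)
    (hCnn : ∀ i j, 0 ≤ C i j) (hDnn : ∀ i j, 0 ≤ D i j)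
    (hHnn : ∀ i j, 0 ≤ H i j) (hH' : ∀ i j, 0 < H' i j) :
    (∑ i, ∑ j, (C * H' * D) i j * (H i j) ^ 2 / H' i j) ≥
      Matrix.trace (Hᵀ * C * H * D) := by
  set A : Fin n → Fin k → Fin n → Fin k → ℝ :=
    fun i j p q => C i p * D q j * H' p q * H i j ^ 2 / H' i j with hA
  set B : Fin n → Fin k → Fin n → Fin k → ℝ :=
    fun i j p q => C i p * D q j * H i j * H p q with hB
  have hL : (∑ i, ∑ j, (C * H' * D) i j * (H i j) ^ 2 / H' i j)
      = ∑ i, ∑ j, ∑ p, ∑ q, A i j p q := by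
    refine Finset.sum_congr rfl fun i _ => Finset.sum_congr rfl fun j _ => ?_
    simp only [mul_apply, hA, Finset.sum_mul, Finset.sum_div]
    rw [Finset.sum_comm]
    refine Finset.sum_congr rfl fun p _ => Finset.sum_congr rfl fun q _ => ?_
    ring
  have hR : Matrix.trace (Hᵀ * C * H * D)
      = ∑ i, ∑ j, ∑ p, ∑ q, B i j p q := by
    simp only [Matrix.trace, Matrix.diag, mul_apply, transpose_apply,
      Finset.sum_mul, hB]
    -- LHS is ∑ j, ∑ q, ∑ p, ∑ i, H i j * C i p * H p q * D q j (roughly)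
    rw [pull_inner]
    rw [inner_swap]
    refine Finset.sum_congr rfl fun i _ => Finset.sum_congr rfl fun j _ =>
      Finset.sum_congr rfl fun p _ => Finset.sum_congr rfl fun q _ => ?_
    ring
  rw [hL, hR, ge_iff_le]
  have h2 : (2:ℝ) * (∑ i, ∑ j, ∑ p, ∑ q, A i j p q)
      = ∑ i, ∑ j, ∑ p, ∑ q, (A i j p q + A p q i j) := by
    have := quad_comm A
    simp only [Finset.sum_add_distrib]
    rw [← this]; ring
  have hmain : (2:ℝ) * (∑ i, ∑ j, ∑ p, ∑ q, B i j p q)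
      ≤ 2 * (∑ i, ∑ j, ∑ p, ∑ q, A i j p q) := by
    rw [h2]
    simp only [Finset.mul_sum]
    refine Finset.sum_le_sum fun i _ => Finset.sum_le_sum fun j _ =>
      Finset.sum_le_sum fun p _ => Finset.sum_le_sum fun q _ => ?_
    have hkey := key_ineq (C i p) (D q j) (H' i j) (H' p q) (H i j) (H p q)
      (hCnn i p) (hDnn q j) (hH' i j) (hH' p q)
    have hCs : C p i = C i p := hC.apply i p
    have hDs : D j q = D q j := hD.apply q j
    simp only [hA, hB, hCs, hDs]
    linarith [hkey]
  linarith
end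

section
/- For nonnegative matrices P ∈ ℝ₊^{m×n}, F ∈ ℝ₊^{m×k}, R ∈ ℝ₊^{n×k} and A, A′ ∈ ℝ₊^{k×k} with A′ entrywise positive, and β ≥ 0, define J(A) = ‖P − F A Rᵀ‖² + β‖A‖² (Frobenius norms) and Z(A, A′) = ‖P‖² − 2 Tr(Fᵀ P R Aᵀ) + ∑_{ij} (Fᵀ F A′ Rᵀ R)_{ij} A_{ij}² / A′_{ij} + β ∑_{ij} A′_{ij} A_{ij}² / A′_{ij}. Then Z(A, A′) ≥ J(A) and Z(A, A) = J(A). -/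
open Matrix

private lemma sum4_reorder {k : ℕ} (f : Fin k → Fin k → Fin k → Fin k → ℝ) :
    ∑ j, ∑ q, ∑ p, ∑ i, f i j p q = ∑ i, ∑ j, ∑ p, ∑ q, f i j p q := by
  calc ∑ j, ∑ q, ∑ p, ∑ i, f i j p q
      = ∑ j, ∑ q, ∑ i, ∑ p, f i j p q :=
        Finset.sum_congr rfl fun _ _ => Finset.sum_congr rfl fun _ _ => Finset.sum_comm
    _ = ∑ j, ∑ i, ∑ q, ∑ p, f i j p q :=
        Finset.sum_congr rfl fun _ _ => Finset.sum_comm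
    _ = ∑ i, ∑ j, ∑ q, ∑ p, f i j p q := Finset.sum_comm
    _ = ∑ i, ∑ j, ∑ p, ∑ q, f i j p q :=
        Finset.sum_congr rfl fun _ _ => Finset.sum_congr rfl fun _ _ => Finset.sum_comm

private lemma sum4_swap {k : ℕ} (f : Fin k → Fin k → Fin k → Fin k → ℝ) :
    ∑ i, ∑ j, ∑ p, ∑ q, f i j p q = ∑ i, ∑ j, ∑ p, ∑ q, f p q i j := by
  calc ∑ i, ∑ j, ∑ p, ∑ q, f i j p q
      = ∑ i, ∑ p, ∑ j, ∑ q, f i j p q :=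
        Finset.sum_congr rfl fun _ _ => Finset.sum_comm
    _ = ∑ p, ∑ i, ∑ j, ∑ q, f i j p q := Finset.sum_comm
    _ = ∑ p, ∑ i, ∑ q, ∑ j, f i j p q :=
        Finset.sum_congr rfl fun _ _ => Finset.sum_congr rfl fun _ _ => Finset.sum_comm
    _ = ∑ p, ∑ q, ∑ i, ∑ j, f i j p q :=
        Finset.sum_congr rfl fun _ _ => Finset.sum_comm

private lemma trace_quad {k : ℕ} (C D A B : Matrix (Fin k) (Fin k) ℝ) :
    Matrix.trace (Aᵀ * C * B * D) =
      ∑ i, ∑ j, ∑ p, ∑ q, C i p * D q j * A i j * B p q := by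
  simp only [Matrix.trace, Matrix.diag, Matrix.mul_apply, Matrix.transpose_apply,
    Finset.sum_mul, Finset.mul_sum]
  rw [← sum4_reorder (fun i j p q => C i p * D q j * A i j * B p q)]
  exact Finset.sum_congr rfl fun j _ => Finset.sum_congr rfl fun q _ =>
    Finset.sum_congr rfl fun p _ => Finset.sum_congr rfl fun i _ => by ring

private lemma sum_mul_eq_trace {k : ℕ} (X Y : Matrix (Fin k) (Fin k) ℝ) :
    ∑ i, ∑ j, X i j * Y i j = Matrix.trace (X * Yᵀ) := by
  simp [Matrix.trace, Matrix.mul_apply, Matrix.diag, mul_comm]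

private lemma sq_div_self'' (a : ℝ) : a ^ 2 / a = a := by
  rcases eq_or_ne a 0 with h | h
  · simp [h]
  · field_simp [pow_two]

/-- Ding et al. auxiliary inequality. -/
private lemma ding {k : ℕ} (C D A A' : Matrix (Fin k) (Fin k) ℝ)
    (hC : ∀ i j, C i j = C j i) (hD : ∀ i j, D i j = D j i)
    (hCn : ∀ i j, 0 ≤ C i j) (hDn : ∀ i j, 0 ≤ D i j)
    (hA : ∀ i j, 0 ≤ A i j) (hA' : ∀ i j, 0 < A' i j) :
    Matrix.trace (Aᵀ * C * A * D) ≤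
      ∑ i, ∑ j, (C * A' * D) i j * (A i j) ^ 2 / A' i j := by
  set S : Fin k → Fin k → ℝ := fun i j => A i j / A' i j with hS
  have hAS : ∀ i j, A i j = A' i j * S i j := by
    intro i j
    show A i j = A' i j * (A i j / A' i j)
    rw [mul_comm, div_mul_cancel₀ _ (hA' i j).ne']
  have hSn : ∀ i j, 0 ≤ S i j := fun i j => div_nonneg (hA i j) (hA' i j).le
  have key : 0 ≤ ∑ i, ∑ j, ∑ p, ∑ q,
      C i p * D q j * A' i j * A' p q * (S i j ^ 2 - S i j * S p q) := by
    have h2 : (2:ℝ) * (∑ i, ∑ j, ∑ p, ∑ q,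
        C i p * D q j * A' i j * A' p q * (S i j ^ 2 - S i j * S p q)) =
        ∑ i, ∑ j, ∑ p, ∑ q,
          C i p * D q j * A' i j * A' p q * (S i j - S p q) ^ 2 := by
      rw [two_mul]
      nth_rewrite 2 [sum4_swap (fun i j p q =>
        C i p * D q j * A' i j * A' p q * (S i j ^ 2 - S i j * S p q))]
      simp only [← Finset.sum_add_distrib]
      refine Finset.sum_congr rfl fun i _ => Finset.sum_congr rfl fun j _ =>
        Finset.sum_congr rfl fun p _ => Finset.sum_congr rfl fun q _ => ?_
      rw [hC p i, hD j q]; ring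
    have hpos : 0 ≤ ∑ i, ∑ j, ∑ p, ∑ q,
        C i p * D q j * A' i j * A' p q * (S i j - S p q) ^ 2 := by
      refine Finset.sum_nonneg fun i _ => Finset.sum_nonneg fun j _ =>
        Finset.sum_nonneg fun p _ => Finset.sum_nonneg fun q _ => ?_
      have := mul_nonneg (mul_nonneg (mul_nonneg (mul_nonneg (hCn i p) (hDn q j))
        (hA' i j).le) (hA' p q).le) (sq_nonneg (S i j - S p q))
      linarith
    linarith
  have expand : (∑ i, ∑ j, (C * A' * D) i j * (A i j) ^ 2 / A' i j)
      - Matrix.trace (Aᵀ * C * A * D) =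
      ∑ i, ∑ j, ∑ p, ∑ q,
        C i p * D q j * A' i j * A' p q * (S i j ^ 2 - S i j * S p q) := by
    rw [trace_quad]
    have lhs1 : (∑ i, ∑ j, (C * A' * D) i j * (A i j) ^ 2 / A' i j) =
        ∑ i, ∑ j, ∑ p, ∑ q, C i p * A' p q * D q j * (A i j ^ 2 / A' i j) := by
      refine Finset.sum_congr rfl fun i _ => Finset.sum_congr rfl fun j _ => ?_
      simp only [Matrix.mul_apply, Finset.sum_mul, Finset.sum_div]
      rw [Finset.sum_comm]
      refine Finset.sum_congr rfl fun p _ => Finset.sum_congr rfl fun q _ => ?_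
      rw [mul_div_assoc]
    rw [lhs1]
    simp only [← Finset.sum_sub_distrib]
    refine Finset.sum_congr rfl fun i _ => Finset.sum_congr rfl fun j _ =>
      Finset.sum_congr rfl fun p _ => Finset.sum_congr rfl fun q _ => ?_
    rw [hAS i j, hAS p q]
    have h0 : A' i j ≠ 0 := (hA' i j).ne'
    field_simp
  linarith [expand ▸ key]


/-- `Z(A, A')` is an auxiliary function for the regularized NMF objective
`J(A) = ‖P - F A Rᵀ‖² + β‖A‖²`. -/
theorem nmf_auxiliary_function {m n k : ℕ}
    (P : Matrix (Fin m) (Fin n) ℝ) (F : Matrix (Fin m) (Fin k) ℝ)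
    (R : Matrix (Fin n) (Fin k) ℝ) (A A' : Matrix (Fin k) (Fin k) ℝ)
    (hP : ∀ i j, 0 ≤ P i j) (hF : ∀ i j, 0 ≤ F i j)
    (hR : ∀ i j, 0 ≤ R i j) (hA : ∀ i j, 0 ≤ A i j)
    (hA' : ∀ i j, 0 < A' i j) (β : ℝ) (hβ : 0 ≤ β) :
    let J : Matrix (Fin k) (Fin k) ℝ → ℝ := fun B =>
      Matrix.trace ((P - F * B * Rᵀ)ᵀ * (P - F * B * Rᵀ)) +
        β * Matrix.trace (Bᵀ * B)
    let Z : Matrix (Fin k) (Fin k) ℝ → Matrix (Fin k) (Fin k) ℝ → ℝ :=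
      fun B B' =>
        Matrix.trace (Pᵀ * P) - 2 * Matrix.trace (Fᵀ * P * R * Bᵀ) +
          (∑ i, ∑ j, (Fᵀ * F * B' * Rᵀ * R) i j * (B i j) ^ 2 / B' i j) +
          β * ∑ i, ∑ j, B' i j * (B i j) ^ 2 / B' i j
    Z A A' ≥ J A ∧ Z A A = J A := by
  intro J Z
  -- expansion of J
  have h1 : Matrix.trace ((F * A * Rᵀ)ᵀ * P) = Matrix.trace (Fᵀ * P * R * Aᵀ) := by
    rw [show (F * A * Rᵀ)ᵀ * P = (R * Aᵀ) * (Fᵀ * P) by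
        simp [Matrix.transpose_mul, Matrix.mul_assoc],
      Matrix.trace_mul_comm,
      show (Fᵀ * P) * (R * Aᵀ) = Fᵀ * P * R * Aᵀ by simp [Matrix.mul_assoc]]
  have h2 : Matrix.trace (Pᵀ * (F * A * Rᵀ)) = Matrix.trace (Fᵀ * P * R * Aᵀ) := by
    rw [show Pᵀ * (F * A * Rᵀ) = ((F * A * Rᵀ)ᵀ * P)ᵀ by simp, Matrix.trace_transpose, h1]
  have h3 : Matrix.trace ((F * A * Rᵀ)ᵀ * (F * A * Rᵀ)) =
      Matrix.trace (Aᵀ * (Fᵀ * F) * A * (Rᵀ * R)) := by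
    rw [show (F * A * Rᵀ)ᵀ * (F * A * Rᵀ) = R * (Aᵀ * (Fᵀ * F) * A * Rᵀ) by
        simp [Matrix.transpose_mul, Matrix.mul_assoc],
      Matrix.trace_mul_comm,
      show (Aᵀ * (Fᵀ * F) * A * Rᵀ) * R = Aᵀ * (Fᵀ * F) * A * (Rᵀ * R) by
        simp [Matrix.mul_assoc]]
  have hJ : J A = Matrix.trace (Pᵀ * P) - 2 * Matrix.trace (Fᵀ * P * R * Aᵀ) +
      Matrix.trace (Aᵀ * (Fᵀ * F) * A * (Rᵀ * R)) + β * Matrix.trace (Aᵀ * A) := by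
    show Matrix.trace ((P - F * A * Rᵀ)ᵀ * (P - F * A * Rᵀ)) + β * Matrix.trace (Aᵀ * A) = _
    rw [Matrix.transpose_sub, Matrix.sub_mul, Matrix.mul_sub, Matrix.mul_sub,
      Matrix.trace_sub, Matrix.trace_sub, Matrix.trace_sub, h1, h2, h3]
    ring
  -- symmetry / nonnegativity facts
  have hCs : ∀ i j, (Fᵀ * F) i j = (Fᵀ * F) j i := by
    intro i j
    simp only [Matrix.mul_apply, Matrix.transpose_apply]
    exact Finset.sum_congr rfl fun x _ => mul_comm _ _
  have hDs : ∀ i j, (Rᵀ * R) i j = (Rᵀ * R) j i := by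
    intro i j
    simp only [Matrix.mul_apply, Matrix.transpose_apply]
    exact Finset.sum_congr rfl fun x _ => mul_comm _ _
  have hCn : ∀ i j, 0 ≤ (Fᵀ * F) i j := by
    intro i j
    simp only [Matrix.mul_apply, Matrix.transpose_apply]
    exact Finset.sum_nonneg fun x _ => mul_nonneg (hF x i) (hF x j)
  have hDn : ∀ i j, 0 ≤ (Rᵀ * R) i j := by
    intro i j
    simp only [Matrix.mul_apply, Matrix.transpose_apply]
    exact Finset.sum_nonneg fun x _ => mul_nonneg (hR x i) (hR x j)
  have hassoc : Fᵀ * F * A' * Rᵀ * R = (Fᵀ * F) * A' * (Rᵀ * R) := by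
    simp [Matrix.mul_assoc]
  have hassocA : Fᵀ * F * A * Rᵀ * R = (Fᵀ * F) * A * (Rᵀ * R) := by
    simp [Matrix.mul_assoc]
  have hding := ding (Fᵀ * F) (Rᵀ * R) A A' hCs hDs hCn hDn hA hA'
  -- β-terms
  have hβ1 : ∑ i, ∑ j, A' i j * A i j ^ 2 / A' i j = Matrix.trace (Aᵀ * A) := by
    rw [show Matrix.trace (Aᵀ * A) = Matrix.trace (A * Aᵀ) from Matrix.trace_mul_comm _ _,
      ← sum_mul_eq_trace A A]
    refine Finset.sum_congr rfl fun i _ => Finset.sum_congr rfl fun j _ => ?_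
    rw [mul_comm, mul_div_assoc, div_self (hA' i j).ne', mul_one, pow_two]
  have hβ2 : ∑ i, ∑ j, A i j * A i j ^ 2 / A i j = Matrix.trace (Aᵀ * A) := by
    rw [show Matrix.trace (Aᵀ * A) = Matrix.trace (A * Aᵀ) from Matrix.trace_mul_comm _ _,
      ← sum_mul_eq_trace A A]
    refine Finset.sum_congr rfl fun i _ => Finset.sum_congr rfl fun j _ => ?_
    rw [mul_div_assoc, sq_div_self'']
  have hmid : ∑ i, ∑ j, ((Fᵀ * F) * A * (Rᵀ * R)) i j * A i j ^ 2 / A i j =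
      Matrix.trace (Aᵀ * (Fᵀ * F) * A * (Rᵀ * R)) := by
    have e : Matrix.trace ((Fᵀ * F) * A * (Rᵀ * R) * Aᵀ) =
        Matrix.trace (Aᵀ * (Fᵀ * F) * A * (Rᵀ * R)) := by
      rw [Matrix.trace_mul_comm ((Fᵀ * F) * A * (Rᵀ * R)) Aᵀ]
      simp only [← Matrix.mul_assoc]
    rw [← e, ← sum_mul_eq_trace]
    refine Finset.sum_congr rfl fun i _ => Finset.sum_congr rfl fun j _ => ?_
    rw [mul_div_assoc, sq_div_self'']
  constructor
  · show Matrix.trace (Pᵀ * P) - 2 * Matrix.trace (Fᵀ * P * R * Aᵀ) +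
      (∑ i, ∑ j, (Fᵀ * F * A' * Rᵀ * R) i j * (A i j) ^ 2 / A' i j) +
      β * ∑ i, ∑ j, A' i j * (A i j) ^ 2 / A' i j ≥ J A
    rw [hJ, hassoc, hβ1]
    linarith [hding]
  · show Matrix.trace (Pᵀ * P) - 2 * Matrix.trace (Fᵀ * P * R * Aᵀ) +
      (∑ i, ∑ j, (Fᵀ * F * A * Rᵀ * R) i j * (A i j) ^ 2 / A i j) +
      β * ∑ i, ∑ j, A i j * (A i j) ^ 2 / A i j = J A
    rw [hJ, hassocA, hβ2, hmid]
end
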